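/- Let ν be a finitely supported signed measure on the lattice ball V_l ⊂ ℤ^d with total mass zero, invariant under sign flips of each coordinate (ν(x) = ν(x^{(i)}) for all i) and under transpositions of coordinates (ν(x) = ν(x^{↔(i,j)}) for all i < j). Let u : C_L → ℝ be a harmonic function of class C³ whose first, second, and third derivatives are bounded on C_L by M·L^{-(d+1)}, M·L^{-(d+2)}, M·L^{-(d+3)} respectively. Then for any y' with V_l(y') ⊂ C_{L/2}, |Σ_{y ∈ V_l(y')} ν(y-y') u(y)| ≤ C·‖ν‖_1·(l/L)³·L^{-d} for a constant C depending only on d and M. -/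

import Mathlib

open MeasureTheory

/-- Euclidean norm of a lattice point in `ℤ^d`. -/
noncomputable def znorm {d : ℕ} (x : Fin d → ℤ) : ℝ := Real.sqrt (∑ i, ((x i : ℝ)) ^ 2)

/-- The embedding of a lattice point of `ℤ^d` into Euclidean space `ℝ^d`. -/
noncomputable def latticeToE {d : ℕ} (x : Fin d → ℤ) : EuclideanSpace ℝ (Fin d) :=
  WithLp.toLp 2 (fun i => (x i : ℝ))

/-!
Expand `u` to second order around `y'`, with the integral form of the remainder. Against `ν`,
the constant term dies because `ν` has total mass zero, and the linear term because each first
moment `∑ ν z * z i` is odd under the flip of coordinate `i`. In the quadratic term the mixed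
moments `∑ ν z * z i * z j` are odd under a flip as well, while the pure ones `∑ ν z * z i ^ 2`
all agree by transposition invariance; so that term is a multiple of `Δu(y')`, which is zero.
The remainder is at most `‖D³u‖ * l ^ 3 / 2` at every point of the support of `ν`.
-/

open Set
open scoped Nat Interval

theorem norm_map_add_sub_sum_iteratedFDeriv_le {E F : Type*} [NormedAddCommGroup E]
    [NormedSpace ℝ E] [NormedAddCommGroup F] [NormedSpace ℝ F] [CompleteSpace F] {f : E → F}
    {x y : E} {n : ℕ} {K : ℝ} (hf : ∀ t ∈ Icc (0 : ℝ) 1, ContDiffAt ℝ (n + 1) f (x + t • y))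
    (hK : ∀ t ∈ Icc (0 : ℝ) 1, ‖iteratedFDeriv ℝ (n + 1) f (x + t • y)‖ ≤ K) :
    ‖f (x + y) - ∑ k ∈ Finset.range (n + 1), (k ! : ℝ)⁻¹ • iteratedFDeriv ℝ k f x (fun _ ↦ y)‖
      ≤ K * ‖y‖ ^ (n + 1) / n ! := by
  rw [map_add_eq_sum_add_integral_iteratedFDeriv hf, add_sub_cancel_left, norm_smul,
    norm_inv, Real.norm_natCast, inv_mul_eq_div]
  gcongr
  have hintegrand : ∀ t ∈ Ι (0 : ℝ) 1,
      ‖(1 - t) ^ n • iteratedFDeriv ℝ (n + 1) f (x + t • y) (fun _ ↦ y)‖ ≤ K * ‖y‖ ^ (n + 1) := by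
    intro t ht
    rw [uIoc_of_le zero_le_one] at ht
    have h1t : |1 - t| ^ n ≤ 1 :=
      pow_le_one₀ (abs_nonneg _) (abs_le.2 ⟨by linarith [ht.2], by linarith [ht.1]⟩)
    have hK' := hK t (Ioc_subset_Icc_self ht)
    have hD := (iteratedFDeriv ℝ (n + 1) f (x + t • y)).le_opNorm_mul_pow_of_le
      (pi_norm_const_le y)
    rw [norm_smul, Real.norm_eq_abs, abs_pow, ← one_mul (K * _)]
    gcongr
    exact hD.trans (by gcongr)
  simpa using intervalIntegral.norm_integral_le_of_norm_le_const hintegrand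

namespace Finsupp

variable {α R : Type*} [Ring R]

theorem sum_support_mul_comp_involutive (ν : α →₀ R) {σ : α → α} (hσ : Function.Involutive σ)
    (hν : ∀ x, ν (σ x) = ν x) (F : α → R) :
    ∑ z ∈ ν.support, ν z * F (σ z) = ∑ z ∈ ν.support, ν z * F z :=
  Finset.sum_nbij' σ σ (by simp [hν]) (by simp [hν]) (fun z _ ↦ hσ z) (fun z _ ↦ hσ z)
    fun z _ ↦ by rw [hν]

theorem sum_support_mul_eq_zero_of_comp_involutive_eq_neg [IsAddTorsionFree R]
    (ν : α →₀ R) {σ : α → α} (hσ : Function.Involutive σ)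
    (hν : ∀ x, ν (σ x) = ν x) {F : α → R} (hF : ∀ z, F (σ z) = -F z) :
    ∑ z ∈ ν.support, ν z * F z = 0 := by
  have h := ν.sum_support_mul_comp_involutive hσ hν F
  simpa only [hF, mul_neg, Finset.sum_neg_distrib, neg_eq_self] using h

theorem abs_sum_support_mul_le (ν : α →₀ ℝ) {g P : α → ℝ} {ε : ℝ}
    (hP : ∑ z ∈ ν.support, ν z * P z = 0) (hg : ∀ z ∈ ν.support, |g z - P z| ≤ ε) :
    |∑ z ∈ ν.support, ν z * g z| ≤ (∑ z ∈ ν.support, |ν z|) * ε := by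
  calc |∑ z ∈ ν.support, ν z * g z| = |∑ z ∈ ν.support, ν z * (g z - P z)| := by
        simp [mul_sub, Finset.sum_sub_distrib, hP]
    _ ≤ ∑ z ∈ ν.support, |ν z| * ε := by
        refine (Finset.abs_sum_le_sum_abs _ _).trans (Finset.sum_le_sum fun z hz ↦ ?_)
        rw [abs_mul]
        exact mul_le_mul_of_nonneg_left (hg z hz) (abs_nonneg _)
    _ = (∑ z ∈ ν.support, |ν z|) * ε := (Finset.sum_mul _ _ _).symm

end Finsupp

section Lattice

variable {d : ℕ}

local notation "E" => EuclideanSpace ℝ (Fin d)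
local notation "e" i => EuclideanSpace.single i (1 : ℝ)

theorem norm_latticeToE (x : Fin d → ℤ) : ‖latticeToE x‖ = znorm x := by
  simp [EuclideanSpace.norm_eq, znorm, latticeToE]

theorem latticeToE_add (x y : Fin d → ℤ) : latticeToE (x + y) = latticeToE x + latticeToE y := by
  ext i
  simp [latticeToE]

theorem latticeToE_eq_sum (z : Fin d → ℤ) : latticeToE z = ∑ i, (z i : ℝ) • e i := by
  ext j
  simp [latticeToE, Pi.single_apply]

theorem map_latticeToE {F G : Type*} [AddCommGroup F] [Module ℝ F] [FunLike G E F]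
    [LinearMapClass G ℝ E F] (A : G) (z : Fin d → ℤ) :
    A (latticeToE z) = ∑ i, (z i : ℝ) • A (e i) := by
  rw [latticeToE_eq_sum, map_sum]
  simp only [map_smul]

theorem involutive_update_neg (i : Fin d) :
    Function.Involutive fun x : Fin d → ℤ ↦ Function.update x i (-(x i)) := by
  intro x
  simp

theorem involutive_comp_swap (i j : Fin d) :
    Function.Involutive fun x : Fin d → ℤ ↦ x ∘ Equiv.swap i j := by
  intro x
  ext k
  simp

variable {ν : (Fin d → ℤ) →₀ ℝ}

theorem sum_mul_coord_sq_eq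
    (hswap : ∀ (x : Fin d → ℤ) (i j : Fin d), ν (x ∘ Equiv.swap i j) = ν x) (i j : Fin d) :
    ∑ z ∈ ν.support, ν z * (z i : ℝ) ^ 2 = ∑ z ∈ ν.support, ν z * (z j : ℝ) ^ 2 := by
  rw [← ν.sum_support_mul_comp_involutive (involutive_comp_swap i j) (fun x ↦ hswap x i j)]
  simp

variable (hflip : ∀ (x : Fin d → ℤ) (i : Fin d), ν (Function.update x i (-(x i))) = ν x)
include hflip

theorem sum_mul_coord_eq_zero (i : Fin d) : ∑ z ∈ ν.support, ν z * (z i : ℝ) = 0 :=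
  ν.sum_support_mul_eq_zero_of_comp_involutive_eq_neg (involutive_update_neg i)
    (fun x ↦ hflip x i) (by simp)

theorem sum_mul_coord_mul_coord_eq_zero {i j : Fin d} (hij : i ≠ j) :
    ∑ z ∈ ν.support, ν z * ((z i : ℝ) * z j) = 0 :=
  ν.sum_support_mul_eq_zero_of_comp_involutive_eq_neg (involutive_update_neg i)
    (fun x ↦ hflip x i) (by simp [Function.update_of_ne hij.symm])

theorem sum_mul_map_latticeToE_eq_zero (A : E →L[ℝ] ℝ) :
    ∑ z ∈ ν.support, ν z * A (latticeToE z) = 0 := by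
  simp_rw [map_latticeToE, smul_eq_mul, Finset.mul_sum]
  rw [Finset.sum_comm]
  refine Finset.sum_eq_zero fun i _ ↦ ?_
  simp_rw [← mul_assoc, ← Finset.sum_mul, sum_mul_coord_eq_zero hflip, zero_mul]

theorem sum_mul_bilin_latticeToE_eq_zero
    (hswap : ∀ (x : Fin d → ℤ) (i j : Fin d), ν (x ∘ Equiv.swap i j) = ν x)
    (B : E →L[ℝ] E →L[ℝ] ℝ) (hB : ∑ i, B (e i) (e i) = 0) :
    ∑ z ∈ ν.support, ν z * B (latticeToE z) (latticeToE z) = 0 := by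
  rcases isEmpty_or_nonempty (Fin d) with hd | ⟨⟨i₀⟩⟩
  · simp [Subsingleton.elim (latticeToE _) 0]
  have hmoment (i j : Fin d) : ∑ z ∈ ν.support, ν z * ((z i : ℝ) * z j) =
      if i = j then ∑ z ∈ ν.support, ν z * (z i₀ : ℝ) ^ 2 else 0 := by
    split_ifs with hij
    · subst hij
      simp_rw [← sq]
      exact sum_mul_coord_sq_eq hswap i i₀
    · exact sum_mul_coord_mul_coord_eq_zero hflip hij
  calc ∑ z ∈ ν.support, ν z * B (latticeToE z) (latticeToE z)
      = ∑ i, ∑ j, (∑ z ∈ ν.support, ν z * ((z i : ℝ) * z j)) * B (e i) (e j) := by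
        simp_rw [map_latticeToE B, sum_apply, smul_apply,
          map_latticeToE (B _), smul_eq_mul, Finset.mul_sum, Finset.sum_mul]
        rw [Finset.sum_comm]
        refine Finset.sum_congr rfl fun i _ ↦ ?_
        rw [Finset.sum_comm]
        refine Finset.sum_congr rfl fun j _ ↦ Finset.sum_congr rfl fun z _ ↦ ?_
        ring
    _ = 0 := by
        simp [hmoment, ← Finset.mul_sum, hB]

theorem abs_sum_mul_add_latticeToE_le (hmass : ∑ z ∈ ν.support, ν z = 0)
    (hswap : ∀ (x : Fin d → ℤ) (i j : Fin d), ν (x ∘ Equiv.swap i j) = ν x)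
    {u : E → ℝ} {p : E} {K l : ℝ}
    (hu : ∀ z ∈ ν.support, ∀ t ∈ Icc (0 : ℝ) 1, ContDiffAt ℝ 3 u (p + t • latticeToE z))
    (hK : ∀ z ∈ ν.support, ∀ t ∈ Icc (0 : ℝ) 1,
      ‖iteratedFDeriv ℝ 3 u (p + t • latticeToE z)‖ ≤ K)
    (hl : ∀ z ∈ ν.support, ‖latticeToE z‖ ≤ l)
    (hΔ : ∑ i, iteratedFDeriv ℝ 2 u p ![e i, e i] = 0) :
    |∑ z ∈ ν.support, ν z * u (p + latticeToE z)|
      ≤ (∑ z ∈ ν.support, |ν z|) * (K * l ^ 3 / 2) := by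
  set P : (Fin d → ℤ) → ℝ := fun z ↦ u p + fderiv ℝ u p (latticeToE z)
    + 2⁻¹ * fderiv ℝ (fderiv ℝ u) p (latticeToE z) (latticeToE z)
  refine ν.abs_sum_support_mul_le (P := P) ?_ fun z hz ↦ ?_
  · have hB : ∑ i, fderiv ℝ (fderiv ℝ u) p (e i) (e i) = 0 := by
      simpa [iteratedFDeriv_two_apply] using hΔ
    simp only [P, mul_add, Finset.sum_add_distrib, ← Finset.sum_mul, hmass,
      sum_mul_map_latticeToE_eq_zero hflip, mul_left_comm _ (2⁻¹ : ℝ), ← Finset.mul_sum,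
      sum_mul_bilin_latticeToE_eq_zero hflip hswap _ hB]
    ring
  · have hK0 : 0 ≤ K := (norm_nonneg _).trans (hK z hz 0 ⟨le_rfl, zero_le_one⟩)
    have h := norm_map_add_sub_sum_iteratedFDeriv_le (n := 2)
      (by exact_mod_cast hu z hz) (hK z hz)
    simp only [Finset.sum_range_succ, Finset.sum_range_zero, iteratedFDeriv_zero_apply,
      iteratedFDeriv_one_apply, iteratedFDeriv_two_apply] at h
    calc |u (p + latticeToE z) - P z| ≤ K * ‖latticeToE z‖ ^ 3 / 2 := by
          convert h using 2 <;> norm_num [P]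
      _ ≤ K * l ^ 3 / 2 := by gcongr; exact hl z hz

end Lattice

theorem stmt11_general (d : ℕ) (M : ℝ) (hM : 0 < M) :
    ∃ C > (0 : ℝ), ∀ (l L : ℝ), 0 < l → 0 < L →
      ∀ ν : (Fin d → ℤ) →₀ ℝ,
        (∀ x ∈ ν.support, znorm x ≤ l) →
        (ν.sum fun _ v => v) = 0 →
        (∀ (x : Fin d → ℤ) (i : Fin d), ν (Function.update x i (-(x i))) = ν x) →
        (∀ (x : Fin d → ℤ) (i j : Fin d), ν (x ∘ Equiv.swap i j) = ν x) →
      ∀ u : EuclideanSpace ℝ (Fin d) → ℝ,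
        ContDiffOn ℝ 3 u (Metric.ball 0 L) →
        (∀ x ∈ Metric.ball (0 : EuclideanSpace ℝ (Fin d)) L,
          ∑ i : Fin d, iteratedFDerivWithin ℝ 2 u (Metric.ball 0 L) x
            ![EuclideanSpace.single i (1 : ℝ), EuclideanSpace.single i (1 : ℝ)] = 0) →
        (∀ k : ℕ, 1 ≤ k → k ≤ 3 →
          ∀ x ∈ Metric.ball (0 : EuclideanSpace ℝ (Fin d)) L,
            ‖iteratedFDerivWithin ℝ k u (Metric.ball 0 L) x‖
              ≤ M * L ^ (-((d : ℝ) + k))) →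
      ∀ y' : Fin d → ℤ,
        (∀ z : Fin d → ℤ, znorm (z - y') ≤ l → ‖latticeToE z‖ < L / 2) →
        |∑ z ∈ ν.support, ν z * u (latticeToE (y' + z))|
          ≤ C * (ν.sum fun _ v => |v|) * (l / L) ^ 3 * L ^ (-(d : ℝ)) := by
  refine ⟨M / 2, by positivity,
    fun l L hl hL ν hsupp hmass hflip hswap u hu hharm hbound y' hy' ↦ ?_⟩
  set p := latticeToE y'
  have hball : Metric.ball (0 : EuclideanSpace ℝ (Fin d)) (L / 2) ⊆ Metric.ball 0 L :=
    Metric.ball_subset_ball (by linarith)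
  have hp : p ∈ Metric.ball 0 (L / 2) := by
    simpa using hy' y' (by simpa [znorm] using hl.le)
  have hseg : ∀ z ∈ ν.support, ∀ t ∈ Icc (0 : ℝ) 1, p + t • latticeToE z ∈ Metric.ball 0 L :=
    fun z hz t ht ↦ hball <| (convex_ball _ _).add_smul_mem hp
      (by simpa [p, ← latticeToE_add] using hy' (y' + z) (by simpa using hsupp z hz)) ht
  have hopen : ∀ n, ∀ x ∈ Metric.ball (0 : EuclideanSpace ℝ (Fin d)) L,
      iteratedFDerivWithin ℝ n u (Metric.ball 0 L) x = iteratedFDeriv ℝ n u x :=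
    fun _ x hx ↦ iteratedFDerivWithin_of_isOpen _ Metric.isOpen_ball hx
  have key := abs_sum_mul_add_latticeToE_le hflip hmass hswap
    (K := M * L ^ (-((d : ℝ) + 3))) (l := l) (p := p)
    (fun z hz t ht ↦ hu.contDiffAt (Metric.isOpen_ball.mem_nhds (hseg z hz t ht)))
    (fun z hz t ht ↦ by
      simpa [hopen 3 _ (hseg z hz t ht)] using hbound 3 (by norm_num) le_rfl _ (hseg z hz t ht))
    (fun z hz ↦ (norm_latticeToE z).trans_le (hsupp z hz))
    (by simpa [hopen 2 p (hball hp)] using hharm p (hball hp))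
  simp_rw [latticeToE_add]
  refine key.trans_eq ?_
  rw [show -((d : ℝ) + 3) = -(d : ℝ) + -(3 : ℕ) by push_cast; ring, Real.rpow_add hL,
    Real.rpow_neg hL.le (3 : ℕ), Real.rpow_natCast]
  simp only [Finsupp.sum, div_pow]
  field_simp

/-- Let `ν` be a finitely supported signed measure on the lattice ball
`V_l ⊆ ℤ^d` with total mass zero, invariant under sign flips of each coordinate and under
transpositions of coordinates. Let `u` be a harmonic `C³` function on the ball `C_L`
whose derivatives of order `1, 2, 3` are bounded by `M·L^{-(d+k)}`. Then for any lattice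
point `y'` with `V_l(y') ⊆ C_{L/2}`,
`|∑_{y∈V_l(y')} ν(y-y') u(y)| ≤ C ‖ν‖₁ (l/L)³ L^{-d}`, with `C` depending only on
`d` and `M`. -/
theorem stmt11 (d : ℕ) (hd : 1 ≤ d) (M : ℝ) (hM : 0 < M) :
    ∃ C > (0 : ℝ), ∀ (l L : ℝ), 0 < l → 0 < L →
      ∀ ν : (Fin d → ℤ) →₀ ℝ,
        (∀ x ∈ ν.support, znorm x ≤ l) →
        (ν.sum fun _ v => v) = 0 →
        (∀ (x : Fin d → ℤ) (i : Fin d), ν (Function.update x i (-(x i))) = ν x) →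
        (∀ (x : Fin d → ℤ) (i j : Fin d), ν (x ∘ Equiv.swap i j) = ν x) →
      ∀ u : EuclideanSpace ℝ (Fin d) → ℝ,
        ContDiffOn ℝ 3 u (Metric.ball 0 L) →
        (∀ x ∈ Metric.ball (0 : EuclideanSpace ℝ (Fin d)) L,
          ∑ i : Fin d, iteratedFDerivWithin ℝ 2 u (Metric.ball 0 L) x
            ![EuclideanSpace.single i (1 : ℝ), EuclideanSpace.single i (1 : ℝ)] = 0) →
        (∀ k : ℕ, 1 ≤ k → k ≤ 3 →
          ∀ x ∈ Metric.ball (0 : EuclideanSpace ℝ (Fin d)) L,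
            ‖iteratedFDerivWithin ℝ k u (Metric.ball 0 L) x‖
              ≤ M * L ^ (-((d : ℝ) + k))) →
      ∀ y' : Fin d → ℤ,
        (∀ z : Fin d → ℤ, znorm (z - y') ≤ l → ‖latticeToE z‖ < L / 2) →
        |∑ z ∈ ν.support, ν z * u (latticeToE (y' + z))|
          ≤ C * (ν.sum fun _ v => |v|) * (l / L) ^ 3 * L ^ (-(d : ℝ)) :=
  stmt11_general d M hM
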